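/- For every n ≥ 3 and every point x ∈ ℝⁿ, there exist n + 1 pairwise disjoint open balls of equal radii, none containing x, that generate a shadow at x, provided there exist n + 1 pairwise disjoint open balls (of possibly different radii) with centers on a common sphere around x, none containing x, generating a shadow at x. (Reduction step: the equal-radius system is obtained by homotheties k_i = r_max/r_i centered at x.) -/

import Mathlib

/-!
A homothety centred at `x` with positive ratio maps balls onto balls, fixes `x` and maps every
line through `x` onto itself. Rescaling the `i`-th ball by `s / rᵢ` to the common radius `s`
therefore keeps `x` outside every ball and preserves the shadow; only disjointness needs an argument.
For `a, b` with `‖a‖ = ‖b‖` one has `‖α • a - β • b‖² = (α - β)²‖a‖² + αβ‖a - b‖²`, so with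
`α = s / p`, `β = s / q` and `‖a - b‖ ≥ p + q` we get `‖α • a - β • b‖² ≥ s²(p + q)²/(pq) ≥ (2s)²`.
-/

open Metric

section Homothety

variable {E : Type*} [NormedAddCommGroup E] [NormedSpace ℝ E]

theorem homothety_mem_ball_homothety_iff {x c y : E} {k r : ℝ} (hk : 0 < k) :
    x + k • (y - x) ∈ ball (x + k • (c - x)) (k * r) ↔ y ∈ ball c r := by
  have hdiff : x + k • (y - x) - (x + k • (c - x)) = k • (y - c) := by module
  rw [mem_ball, mem_ball, dist_eq_norm, dist_eq_norm, hdiff, norm_smul, Real.norm_of_nonneg hk.le,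
    mul_lt_mul_iff_right₀ hk]

end Homothety

section Disjoint

variable {E : Type*} [NormedAddCommGroup E] [InnerProductSpace ℝ E]

theorem norm_smul_sub_smul_sq_of_norm_eq {a b : E} (hab : ‖a‖ = ‖b‖) (α β : ℝ) :
    ‖α • a - β • b‖ ^ 2 = (α - β) ^ 2 * ‖a‖ ^ 2 + α * β * ‖a - b‖ ^ 2 := by
  rw [norm_sub_sq_real, norm_sub_sq_real, norm_smul, norm_smul, real_inner_smul_left,
    real_inner_smul_right, Real.norm_eq_abs, Real.norm_eq_abs, mul_pow, mul_pow, sq_abs, sq_abs,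
    ← hab]
  ring

theorem two_mul_le_norm_div_smul_sub_div_smul {a b : E} {p q s : ℝ} (hp : 0 < p) (hq : 0 < q)
    (hab : ‖a‖ = ‖b‖) (hpq : p + q ≤ ‖a - b‖) :
    2 * s ≤ ‖(s / p) • a - (s / q) • b‖ := by
  have hsep : s ^ 2 * (p + q) ^ 2 / (p * q) ≤ (s / p) * (s / q) * ‖a - b‖ ^ 2 := by
    calc s ^ 2 * (p + q) ^ 2 / (p * q) = s ^ 2 / (p * q) * (p + q) ^ 2 := by ring
      _ ≤ s ^ 2 / (p * q) * ‖a - b‖ ^ 2 := by gcongr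
      _ = (s / p) * (s / q) * ‖a - b‖ ^ 2 := by ring
  have hamgm : (2 * s) ^ 2 ≤ s ^ 2 * (p + q) ^ 2 / (p * q) := by
    rw [le_div_iff₀ (mul_pos hp hq)]
    nlinarith [mul_nonneg (sq_nonneg s) (sq_nonneg (p - q))]
  refine le_of_pow_le_pow_left₀ two_ne_zero (norm_nonneg _) ?_
  rw [norm_smul_sub_smul_sq_of_norm_eq hab]
  nlinarith [sq_nonneg (s / p - s / q), sq_nonneg ‖a‖]

theorem disjoint_ball_homothety {x a b : E} {p q s : ℝ} (hp : 0 < p) (hq : 0 < q) (hs : 0 < s)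
    (hab : ‖a - x‖ = ‖b - x‖) (hdisj : Disjoint (ball a p) (ball b q)) :
    Disjoint (ball (x + (s / p) • (a - x)) s) (ball (x + (s / q) • (b - x)) s) := by
  rw [disjoint_ball_ball_iff hp hq, dist_eq_norm, ← sub_sub_sub_cancel_right a b x] at hdisj
  rw [disjoint_ball_ball_iff hs hs, dist_eq_norm, add_sub_add_left_eq_sub, ← two_mul]
  exact two_mul_le_norm_div_smul_sub_div_smul hp hq hab hdisj

end Disjoint

theorem stmt_18_general (n : ℕ) (x : EuclideanSpace ℝ (Fin n)) (R : ℝ)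
    (c : Fin (n + 1) → EuclideanSpace ℝ (Fin n)) (r : Fin (n + 1) → ℝ) (i₀ : Fin (n + 1))
    (hr : ∀ i, 0 < r i) (hR : ∀ i, ‖c i - x‖ = R)
    (hdisj : ∀ i j, i ≠ j →
      Disjoint (Metric.ball (c i) (r i)) (Metric.ball (c j) (r j)))
    (hx : ∀ i, x ∉ Metric.ball (c i) (r i))
    (hshadow : ∀ v : EuclideanSpace ℝ (Fin n), v ≠ 0 →
      ∃ (i : Fin (n + 1)) (t : ℝ), x + t • v ∈ Metric.ball (c i) (r i)) :
    (∀ i j, i ≠ j →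
      Disjoint (Metric.ball (x + (r i₀ / r i) • (c i - x)) (r i₀))
        (Metric.ball (x + (r i₀ / r j) • (c j - x)) (r i₀))) ∧
    (∀ i, x ∉ Metric.ball (x + (r i₀ / r i) • (c i - x)) (r i₀)) ∧
    (∀ v : EuclideanSpace ℝ (Fin n), v ≠ 0 →
      ∃ (i : Fin (n + 1)) (t : ℝ),
        x + t • v ∈ Metric.ball (x + (r i₀ / r i) • (c i - x)) (r i₀)) := by
  have hscale : ∀ i y, x + (r i₀ / r i) • (y - x) ∈ ball (x + (r i₀ / r i) • (c i - x)) (r i₀) ↔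
      y ∈ ball (c i) (r i) := fun i y => by
    simpa only [div_mul_cancel₀ _ (hr i).ne'] using
      homothety_mem_ball_homothety_iff (x := x) (c := c i) (y := y) (r := r i)
        (div_pos (hr i₀) (hr i))
  refine ⟨fun i j hij => ?_, fun i => ?_, fun v hv => ?_⟩
  · exact disjoint_ball_homothety (hr i) (hr j) (hr i₀) ((hR i).trans (hR j).symm) (hdisj i j hij)
  · simpa using (hscale i x).not.mpr (hx i)
  · obtain ⟨i, t, ht⟩ := hshadow v hv
    exact ⟨i, r i₀ / r i * t, by simpa [mul_smul] using (hscale i (x + t • v)).mpr ht⟩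

theorem stmt_18 (n : ℕ) (hn : 3 ≤ n) (x : EuclideanSpace ℝ (Fin n)) (R : ℝ)
    (c : Fin (n + 1) → EuclideanSpace ℝ (Fin n)) (r : Fin (n + 1) → ℝ) (i₀ : Fin (n + 1))
    (hr : ∀ i, 0 < r i) (hR : ∀ i, ‖c i - x‖ = R) (hrR : ∀ i, r i < R)
    (hmax : ∀ i, r i ≤ r i₀)
    (hdisj : ∀ i j, i ≠ j →
      Disjoint (Metric.ball (c i) (r i)) (Metric.ball (c j) (r j)))
    (hx : ∀ i, x ∉ Metric.ball (c i) (r i))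
    (hshadow : ∀ v : EuclideanSpace ℝ (Fin n), v ≠ 0 →
      ∃ (i : Fin (n + 1)) (t : ℝ), x + t • v ∈ Metric.ball (c i) (r i)) :
    (∀ i j, i ≠ j →
      Disjoint (Metric.ball (x + (r i₀ / r i) • (c i - x)) (r i₀))
        (Metric.ball (x + (r i₀ / r j) • (c j - x)) (r i₀))) ∧
    (∀ i, x ∉ Metric.ball (x + (r i₀ / r i) • (c i - x)) (r i₀)) ∧
    (∀ v : EuclideanSpace ℝ (Fin n), v ≠ 0 →
      ∃ (i : Fin (n + 1)) (t : ℝ),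
        x + t • v ∈ Metric.ball (x + (r i₀ / r i) • (c i - x)) (r i₀)) :=
  stmt_18_general n x R c r i₀ hr hR hdisj hx hshadow
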